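/- Let M be a von Neumann algebra acting on a complex Hilbert space H whose center consists only of the scalar multiples of the identity (a factor), and assume M contains a nontrivial symmetric projection. Fix an integer n ≥ 2. Then a bijective map φ: M → M with φ(I) = I and φ(λA) = λφ(A) for all λ ∈ ℂ is a multiplicative *-Lie n-map (i.e., φ(p_{n*}(x₁,…,x_n)) = p_{n*}(φ(x₁),…,φ(x_n)) for all x₁,…,x_n ∈ M) if and only if φ is a *-isomorphism (additive, multiplicative, and star-preserving). -/

import Mathlib

/-
Feeding `(i, 1, …, 1, y, z)` (or `(i y, z)` when `n = 2`) to `p_{n*}` gives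
`2^{n-2} i (yz + zy*)`, so a unital, `ℂ`-homogeneous `*`-Lie `n`-map `φ` preserves the Jordan
`*`-product `yz + zy*`, and (replacing `y` by `i y`) also `yz - zy*`. From these two identities `φ`
preserves `*`, self-adjointness and products of self-adjoint elements, and
`φ (a + s) = φ a + φ s` for `a` self-adjoint and `s` skew, so additivity reduces to self-adjoint
elements. These are cut into Peirce components with respect to a nontrivial projection `e`, whose
image is again a projection with `φ (1 - e) = 1 - φ e`. On `e M (1 - e)` additivity is read off a
single Jordan product; on the diagonal corners it follows from primeness: if `a M b = 0`, the
projection onto `⋂_{z ∈ M} ker (a z)` lies in `M` and commutes with `M`, so it is `0` or `1`.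
Once `φ` is additive, adding the two identities gives `φ (xy) = φ x φ y`.
-/

/-- The `*`-Lie product `[x,y]_* = xy - y x*`. -/
def starLie {R : Type*} [Ring R] [StarRing R] (x y : R) : R := x * y - y * star x

/-- `pvec m x = p_{(m+1)*}(x 0, ..., x m)`. -/
def pvec {R : Type*} [Ring R] [StarRing R] : (m : ℕ) → (Fin (m + 1) → R) → R
  | 0, x => x 0
  | m + 1, x => starLie (pvec m (fun i => x i.castSucc)) (x (Fin.last (m + 1)))

open Complex ComplexStarModule

def IsPrimeRing (A : Type*) [Ring A] : Prop :=
  ∀ a b : A, (∀ z, a * z * b = 0) → a = 0 ∨ b = 0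

section Peirce

variable {A : Type*} [Ring A] [StarRing A] {e m n : A}

theorem IsSelfAdjoint.mul_star_eq_zero (he : IsSelfAdjoint e) (hm : m * e = 0) :
    e * star m = 0 := by
  simpa [he.star_eq] using congr_arg star hm

theorem IsSelfAdjoint.star_mul_eq_star (he : IsSelfAdjoint e) (hm : e * m = m) :
    star m * e = star m := by
  simpa [he.star_eq] using congr_arg star hm

theorem IsSelfAdjoint.mul_add_star_mul_one_sub (he : IsSelfAdjoint e) (hm₁ : e * m = m)
    (hm₂ : m * e = 0) : e * (m + star m) * (1 - e) = m := by
  rw [mul_add, he.mul_star_eq_zero hm₂, hm₁, add_zero, mul_sub, mul_one, hm₂, sub_zero]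

/- The only `e A (1 - e)`-component of this Jordan product is `m + n`; this is how additivity on
that corner is read off. -/
theorem IsStarProjection.jordan_peirce_identity (he : IsStarProjection e) (hm₁ : e * m = m)
    (hm₂ : m * e = 0) (hn₁ : e * n = n) (hn₂ : n * e = 0) :
    (e + (m + star m)) * ((n + star n) + (1 - e)) + ((n + star n) + (1 - e)) * (e + (m + star m)) =
      (m * star n + star (m * star n)) + ((m + n) + star (m + n)) +
        (star m * n + star (star m * n)) := by
  have hmn : m * n = 0 := by rw [← hn₁, ← mul_assoc, hm₂, zero_mul]
  have hnm : n * m = 0 := by rw [← hm₁, ← mul_assoc, hn₂, zero_mul]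
  have hsmsn : star m * star n = 0 := by rw [← star_mul, hnm, star_zero]
  have hsnsm : star n * star m = 0 := by rw [← star_mul, hmn, star_zero]
  simp only [mul_add, add_mul, mul_sub, sub_mul, mul_one, one_mul, star_add, star_mul, star_star,
    he.isIdempotentElem.eq, hm₁, hm₂, hn₁, hn₂, he.isSelfAdjoint.mul_star_eq_zero hm₂,
    he.isSelfAdjoint.mul_star_eq_zero hn₂, he.isSelfAdjoint.star_mul_eq_star hm₁,
    he.isSelfAdjoint.star_mul_eq_star hn₁, hmn, hnm, hsmsn, hsnsm]
  abel

end Peirce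

section StarLie

variable {R S : Type*} [Ring R] [StarRing R] [Ring S] [StarRing S]

theorem pvec_snoc {m : ℕ} (x : Fin (m + 1) → R) (z : R) :
    pvec (m + 1) (Fin.snoc x z) = starLie (pvec m x) z := by
  simp only [pvec, Fin.snoc_castSucc, Fin.snoc_last]

theorem map_pvec {f : R → S} (hadd : ∀ a b, f (a + b) = f a + f b)
    (hmul : ∀ a b, f (a * b) = f a * f b) (hstar : ∀ a, f (star a) = star (f a)) :
    ∀ (m : ℕ) (x : Fin (m + 1) → R), f (pvec m x) = pvec m (fun i => f (x i))
  | 0, _ => rfl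
  | m + 1, x => by
    have hsub : ∀ a b, f (a - b) = f a - f b := (AddMonoidHom.mk' f hadd).map_sub
    rw [pvec, pvec, starLie, starLie, hsub, hmul, hmul, hstar, map_pvec hadd hmul hstar m]

end StarLie

section ImagVec

variable {R S : Type*} [Ring R] [Algebra ℂ R] [Ring S] [Algebra ℂ S]

def imagVec (y : R) : (k : ℕ) → Fin (k + 1) → R
  | 0 => fun _ => I • y
  | k + 1 => Fin.snoc (imagVec 1 k) y

theorem map_imagVec {f : R → S} (hone : f 1 = 1) (hI : ∀ x, f (I • x) = I • f x)
    (y : R) : ∀ k, (fun i => f (imagVec y k i)) = imagVec (f y) k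
  | 0 => funext fun _ => hI y
  | k + 1 => by
    rw [imagVec, imagVec, ← Function.comp_def, Fin.comp_snoc, Function.comp_def,
      map_imagVec hone hI 1 k, hone]

variable [StarRing R] [StarModule ℂ R]

theorem starLie_smul (c : ℂ) (y z : R) :
    starLie (c • y) z = c • (y * z) - (starRingEnd ℂ c) • (z * star y) := by
  rw [starLie, star_smul, smul_mul_assoc, mul_smul_comm, Complex.star_def]

theorem pvec_imagVec : ∀ (k : ℕ) (y : R), pvec k (imagVec y k) = ((2 : ℂ) ^ k * I) • y
  | 0, y => by simp [pvec, imagVec]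
  | k + 1, y => by
    rw [imagVec, pvec_snoc, pvec_imagVec k, starLie_smul, one_mul, star_one, mul_one, ← sub_smul]
    congr 1
    simp only [map_mul, map_pow, map_ofNat, Complex.conj_I]
    ring

theorem pvec_snoc_imagVec (m : ℕ) (y z : R) :
    pvec (m + 1) (Fin.snoc (imagVec y m) z) =
      ((2 : ℂ) ^ m * I) • (y * z + z * star y) := by
  rw [pvec_snoc, pvec_imagVec, starLie_smul, smul_add, sub_eq_add_neg, ← neg_smul]
  congr 2
  simp only [map_mul, map_pow, map_ofNat, Complex.conj_I]
  ring

end ImagVec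

section JordanStarMap

variable {R : Type*} [Ring R] [StarRing R] [Algebra ℂ R]

structure IsJordanStarMap (ψ : R → R) : Prop where
  map_one : ψ 1 = 1
  map_smul (c : ℂ) (x : R) : ψ (c • x) = c • ψ x
  map_jordanStar (y z : R) : ψ (y * z + z * star y) = ψ y * ψ z + ψ z * star (ψ y)

namespace IsJordanStarMap

variable {ψ : R → R}

theorem map_zero (hψ : IsJordanStarMap ψ) : ψ 0 = 0 := by
  simpa using hψ.map_smul 0 0

theorem map_neg (hψ : IsJordanStarMap ψ) (x : R) : ψ (-x) = -ψ x := by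
  simpa using hψ.map_smul (-1) x

theorem map_add_star (hψ : IsJordanStarMap ψ) (y : R) : ψ (y + star y) = ψ y + star (ψ y) := by
  simpa [hψ.map_one] using hψ.map_jordanStar y 1

theorem star_map_of_star_eq_neg (hψ : IsJordanStarMap ψ) {s : R} (hs : star s = -s) :
    star (ψ s) = -ψ s := by
  have h := hψ.map_add_star s
  rw [hs, add_neg_cancel, hψ.map_zero, eq_comm, add_eq_zero_iff_eq_neg'] at h
  exact h

variable [StarModule ℂ R]

theorem of_map_pvec {m : ℕ} (hone : ψ 1 = 1) (hsmul : ∀ (c : ℂ) (x : R), ψ (c • x) = c • ψ x)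
    (h : ∀ x : Fin (m + 2) → R, ψ (pvec (m + 1) x) = pvec (m + 1) (fun i => ψ (x i))) :
    IsJordanStarMap ψ where
  map_one := hone
  map_smul := hsmul
  map_jordanStar y z := by
    have key := h (Fin.snoc (imagVec y m) z)
    rw [← Function.comp_def ψ, Fin.comp_snoc, Function.comp_def, map_imagVec hone (hsmul I),
      pvec_snoc_imagVec, pvec_snoc_imagVec, hsmul] at key
    exact (smul_right_inj (mul_ne_zero (pow_ne_zero _ two_ne_zero) I_ne_zero)).1 key

theorem map_lieStar (hψ : IsJordanStarMap ψ) (y z : R) :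
    ψ (y * z - z * star y) = ψ y * ψ z - ψ z * star (ψ y) := by
  have h := hψ.map_jordanStar (I • y) z
  simp only [hψ.map_smul, star_smul, smul_mul_assoc, mul_smul_comm, Complex.star_def, conj_I,
    neg_smul, mul_neg, ← sub_eq_add_neg, ← smul_sub] at h
  exact (smul_right_inj I_ne_zero).1 h

theorem map_sub_star (hψ : IsJordanStarMap ψ) (y : R) : ψ (y - star y) = ψ y - star (ψ y) := by
  simpa [hψ.map_one] using hψ.map_lieStar y 1

theorem isSelfAdjoint_map (hψ : IsJordanStarMap ψ) {a : R} (ha : IsSelfAdjoint a) :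
    IsSelfAdjoint (ψ a) := by
  have h := hψ.map_sub_star a
  rw [ha.star_eq, sub_self, hψ.map_zero, eq_comm, sub_eq_zero] at h
  exact h.symm

theorem map_add_of_star_eq_neg (hψ : IsJordanStarMap ψ) {a s : R} (ha : IsSelfAdjoint a)
    (hs : star s = -s) : ψ (a + s) = ψ a + ψ s := by
  have h₁ : (a + s) + star (a + s) = (2 : ℂ) • a := by rw [star_add, ha.star_eq, hs, two_smul]; abel
  have h₂ : (a + s) - star (a + s) = (2 : ℂ) • s := by rw [star_add, ha.star_eq, hs, two_smul]; abel
  have k₁ := hψ.map_add_star (a + s)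
  have k₂ := hψ.map_sub_star (a + s)
  rw [h₁, hψ.map_smul] at k₁
  rw [h₂, hψ.map_smul] at k₂
  apply (smul_right_inj (two_ne_zero (α := ℂ))).1
  rw [two_smul, smul_add, k₁, k₂]
  abel

theorem map_add_I_smul (hψ : IsJordanStarMap ψ) {a b : R} (ha : IsSelfAdjoint a)
    (hb : IsSelfAdjoint b) : ψ (a + I • b) = ψ a + I • ψ b := by
  rw [hψ.map_add_of_star_eq_neg ha (by simp [star_smul, hb.star_eq]), hψ.map_smul]

theorem map_eq_realPart_add_imaginaryPart (hψ : IsJordanStarMap ψ) (x : R) :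
    ψ x = ψ (ℜ x) + I • ψ (ℑ x) := by
  conv_lhs => rw [← realPart_add_I_smul_imaginaryPart x]
  exact hψ.map_add_I_smul (ℜ x).2 (ℑ x).2

theorem map_star (hψ : IsJordanStarMap ψ) (x : R) : ψ (star x) = star (ψ x) := by
  have hx : star x = ℜ x + I • ((-ℑ x : selfAdjoint R) : R) := by
    conv_lhs => rw [← realPart_add_I_smul_imaginaryPart x]
    simp [star_smul, (ℜ x).2.star_eq, (ℑ x).2.star_eq]
  rw [hx, hψ.map_add_I_smul (ℜ x).2 (-ℑ x).2, hψ.map_eq_realPart_add_imaginaryPart x]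
  simp [star_smul, (hψ.isSelfAdjoint_map (ℜ x).2).star_eq, (hψ.isSelfAdjoint_map (ℑ x).2).star_eq,
    hψ.map_neg]

theorem map_mul_add_mul_of_isSelfAdjoint (hψ : IsJordanStarMap ψ) {a : R} (ha : IsSelfAdjoint a)
    (x : R) : ψ (a * x + x * a) = ψ a * ψ x + ψ x * ψ a := by
  simpa [ha.star_eq, (hψ.isSelfAdjoint_map ha).star_eq] using hψ.map_jordanStar a x

theorem map_mul_sub_mul_of_isSelfAdjoint (hψ : IsJordanStarMap ψ) {a : R} (ha : IsSelfAdjoint a)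
    (x : R) : ψ (a * x - x * a) = ψ a * ψ x - ψ x * ψ a := by
  simpa [ha.star_eq, (hψ.isSelfAdjoint_map ha).star_eq] using hψ.map_lieStar a x

theorem map_mul_of_isSelfAdjoint (hψ : IsJordanStarMap ψ) {a b : R} (ha : IsSelfAdjoint a)
    (hb : IsSelfAdjoint b) : ψ (a * b) = ψ a * ψ b := by
  have h := hψ.map_add_of_star_eq_neg (a := a * b + b * a) (s := a * b - b * a)
    (by simp [IsSelfAdjoint, ha.star_eq, hb.star_eq, add_comm]) (by simp [ha.star_eq, hb.star_eq])
  rw [add_add_sub_cancel, ← two_smul ℂ, hψ.map_smul, hψ.map_mul_add_mul_of_isSelfAdjoint ha,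
    hψ.map_mul_sub_mul_of_isSelfAdjoint ha, add_add_sub_cancel, ← two_smul ℂ] at h
  exact (smul_right_inj two_ne_zero).1 h

theorem map_add_of_forall_isSelfAdjoint (hψ : IsJordanStarMap ψ)
    (h : ∀ a b : R, IsSelfAdjoint a → IsSelfAdjoint b → ψ (a + b) = ψ a + ψ b) (x y : R) :
    ψ (x + y) = ψ x + ψ y := by
  rw [hψ.map_eq_realPart_add_imaginaryPart (x + y), map_add, map_add, AddSubgroup.coe_add,
    AddSubgroup.coe_add, h _ _ (ℜ x).2 (ℜ y).2, h _ _ (ℑ x).2 (ℑ y).2,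
    hψ.map_eq_realPart_add_imaginaryPart x, hψ.map_eq_realPart_add_imaginaryPart y, smul_add]
  abel

theorem map_mul_of_map_add (hψ : IsJordanStarMap ψ) (hadd : ∀ x y : R, ψ (x + y) = ψ x + ψ y)
    (x y : R) : ψ (x * y) = ψ x * ψ y := by
  have h := hadd (x * y + y * star x) (x * y - y * star x)
  rw [add_add_sub_cancel, ← two_smul ℂ, hψ.map_smul, hψ.map_jordanStar, hψ.map_lieStar,
    add_add_sub_cancel, ← two_smul ℂ] at h
  exact (smul_right_inj two_ne_zero).1 h

variable {e : R}

theorem isStarProjection_map (hψ : IsJordanStarMap ψ) (he : IsStarProjection e) :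
    IsStarProjection (ψ e) :=
  ⟨by rw [IsIdempotentElem, ← hψ.map_mul_of_isSelfAdjoint he.isSelfAdjoint he.isSelfAdjoint,
      he.isIdempotentElem.eq], hψ.isSelfAdjoint_map he.isSelfAdjoint⟩

theorem map_mul_eq_and_map_mul_eq_zero (hψ : IsJordanStarMap ψ) (he : IsStarProjection e) {m : R}
    (hm₁ : e * m = m) (hm₂ : m * e = 0) : ψ e * ψ m = ψ m ∧ ψ m * ψ e = 0 := by
  have hJ := hψ.map_mul_add_mul_of_isSelfAdjoint he.isSelfAdjoint m
  have hL := hψ.map_mul_sub_mul_of_isSelfAdjoint he.isSelfAdjoint m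
  rw [hm₁, hm₂, add_zero] at hJ
  rw [hm₁, hm₂, sub_zero] at hL
  have h₂ : ψ m * ψ e = 0 := by
    have h : ψ m * ψ e + ψ m * ψ e = 0 := by
      have := hJ.symm.trans hL
      rw [sub_eq_add_neg, add_right_inj, eq_neg_iff_add_eq_zero] at this
      exact this
    rw [← two_smul ℂ] at h
    exact (smul_eq_zero.1 h).resolve_left two_ne_zero
  exact ⟨by rw [h₂, add_zero] at hJ; exact hJ.symm, h₂⟩

theorem map_one_sub (hψ : IsJordanStarMap ψ) (hbij : Function.Bijective ψ)
    (he : IsStarProjection e) : ψ (1 - e) = 1 - ψ e := by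
  have hf := he.one_sub
  obtain ⟨t, ht⟩ := hbij.2 (ψ e + ψ (1 - e))
  have hts : IsSelfAdjoint t := hbij.1 <| by
    rw [hψ.map_star, ht, star_add, (hψ.isSelfAdjoint_map he.isSelfAdjoint).star_eq,
      (hψ.isSelfAdjoint_map hf.isSelfAdjoint).star_eq]
  have hmul : ∀ p, IsStarProjection p → ψ (t * p) = ψ e * ψ p + ψ (1 - e) * ψ p := fun p hp => by
    rw [hψ.map_mul_of_isSelfAdjoint hts hp.isSelfAdjoint, ht, add_mul]
  have hte : t * e = e := hbij.1 <| by
    rw [hmul e he, ← hψ.map_mul_of_isSelfAdjoint he.isSelfAdjoint he.isSelfAdjoint,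
      ← hψ.map_mul_of_isSelfAdjoint hf.isSelfAdjoint he.isSelfAdjoint, he.isIdempotentElem.eq,
      he.isIdempotentElem.one_sub_mul_self, hψ.map_zero, add_zero]
  have htf : t * (1 - e) = 1 - e := hbij.1 <| by
    rw [hmul _ hf, ← hψ.map_mul_of_isSelfAdjoint he.isSelfAdjoint hf.isSelfAdjoint,
      ← hψ.map_mul_of_isSelfAdjoint hf.isSelfAdjoint hf.isSelfAdjoint, hf.isIdempotentElem.eq,
      he.isIdempotentElem.mul_one_sub_self, hψ.map_zero, zero_add]
  have ht1 : t = 1 := by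
    calc t = t * e + t * (1 - e) := by noncomm_ring
      _ = 1 := by rw [hte, htf, add_sub_cancel]
  calc ψ (1 - e) = ψ t - ψ e := by rw [ht, add_sub_cancel_left]
    _ = 1 - ψ e := by rw [ht1, hψ.map_one]

theorem map_mul_mul_add_mul_mul (hψ : IsJordanStarMap ψ) {p t : R} (hp : IsSelfAdjoint p)
    (ht : IsSelfAdjoint t) (q : R) :
    ψ (p * t * q + q * t * p) = ψ p * ψ t * ψ q + ψ q * ψ t * ψ p := by
  have h := hψ.map_jordanStar (p * t) q
  rwa [star_mul, ht.star_eq, hp.star_eq, hψ.map_mul_of_isSelfAdjoint hp ht, star_mul,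
    (hψ.isSelfAdjoint_map ht).star_eq, (hψ.isSelfAdjoint_map hp).star_eq, ← mul_assoc,
    ← mul_assoc] at h

theorem map_mul_mul_self (hψ : IsJordanStarMap ψ) {p t : R} (hp : IsSelfAdjoint p)
    (ht : IsSelfAdjoint t) : ψ (p * t * p) = ψ p * ψ t * ψ p := by
  have h := hψ.map_mul_mul_add_mul_mul hp ht p
  rw [← two_smul ℂ, ← two_smul ℂ, hψ.map_smul] at h
  exact (smul_right_inj two_ne_zero).1 h

theorem map_eq_peirce (hψ : IsJordanStarMap ψ) (hbij : Function.Bijective ψ)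
    (he : IsStarProjection e) {t : R} (ht : IsSelfAdjoint t) :
    ψ t = ψ (e * t * e) + ψ (e * t * (1 - e) + star (e * t * (1 - e))) +
      ψ ((1 - e) * t * (1 - e)) := by
  have hf := he.one_sub
  rw [star_mul, star_mul, hf.isSelfAdjoint.star_eq, ht.star_eq, he.isSelfAdjoint.star_eq,
    ← mul_assoc, hψ.map_mul_mul_self he.isSelfAdjoint ht,
    hψ.map_mul_mul_add_mul_mul he.isSelfAdjoint ht,
    hψ.map_mul_mul_self hf.isSelfAdjoint ht, hψ.map_one_sub hbij he]
  noncomm_ring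

theorem map_add_add_of_peirce (hψ : IsJordanStarMap ψ) (hbij : Function.Bijective ψ)
    (he : IsStarProjection e) {d₁ w d₂ : R} (hd₁ : IsSelfAdjoint d₁) (hed₁ : e * d₁ = d₁)
    (hw₁ : e * w = w) (hw₂ : w * e = 0) (hd₂ : IsSelfAdjoint d₂) (hed₂ : e * d₂ = 0) :
    ψ (d₁ + (w + star w) + d₂) = ψ d₁ + ψ (w + star w) + ψ d₂ := by
  set t := d₁ + (w + star w) + d₂ with ht_def
  have ht : IsSelfAdjoint t :=
    (hd₁.add (IsSelfAdjoint.add_star_self w)).add hd₂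
  have het : e * t = d₁ + w := by
    rw [ht_def, mul_add, mul_add, mul_add, hed₁, hw₁, he.isSelfAdjoint.mul_star_eq_zero hw₂, hed₂,
      add_zero, add_zero]
  have hte : t * e = d₁ + star w := by
    have h := congr_arg star het
    rwa [star_mul, ht.star_eq, he.isSelfAdjoint.star_eq, star_add, hd₁.star_eq] at h
  have h₁₁ : e * t * e = d₁ := by
    rw [het, add_mul, ← hd₁.star_eq, he.isSelfAdjoint.star_mul_eq_star hed₁, hw₂, add_zero]
  have h₁₂ : e * t * (1 - e) = w := by
    rw [mul_sub, mul_one, h₁₁, het, add_sub_cancel_left]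
  have h₂₂ : (1 - e) * t * (1 - e) = d₂ := by
    calc (1 - e) * t * (1 - e) = t - e * t - t * e + e * t * e := by noncomm_ring
      _ = d₂ := by rw [h₁₁, het, hte, ht_def]; abel
  rw [hψ.map_eq_peirce hbij he ht, h₁₁, h₁₂, h₂₂]

theorem map_mul_star_and_map_star_mul (hψ : IsJordanStarMap ψ) (he : IsStarProjection e)
    {m n : R} (hm₁ : e * m = m) (hm₂ : m * e = 0) (hn₁ : e * n = n) (hn₂ : n * e = 0) :
    ψ (m * star n) = ψ m * star (ψ n) ∧ ψ (star m * n) = star (ψ m) * ψ n := by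
  have hnm : n * m = 0 := by rw [← hm₁, ← mul_assoc, hn₂, zero_mul]
  have hnm' : ψ n * ψ m = 0 := by
    rw [← (hψ.map_mul_eq_and_map_mul_eq_zero he hm₁ hm₂).1, ← mul_assoc,
      (hψ.map_mul_eq_and_map_mul_eq_zero he hn₁ hn₂).2, zero_mul]
  exact ⟨by simpa [hnm, hnm'] using hψ.map_jordanStar n m,
    by simpa [hnm, hnm', hψ.map_star] using hψ.map_jordanStar (star m) n⟩

theorem map_add_of_mul_eq_of_mul_eq_zero (hψ : IsJordanStarMap ψ) (hbij : Function.Bijective ψ)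
    (he : IsStarProjection e) {m n : R} (hm₁ : e * m = m) (hm₂ : m * e = 0) (hn₁ : e * n = n)
    (hn₂ : n * e = 0) : ψ (m + n) = ψ m + ψ n := by
  have hE := hψ.isStarProjection_map he
  have hmn₁ : e * (m + n) = m + n := by rw [mul_add, hm₁, hn₁]
  have hmn₂ : (m + n) * e = 0 := by rw [add_mul, hm₂, hn₂, add_zero]
  obtain ⟨hm₁', hm₂'⟩ := hψ.map_mul_eq_and_map_mul_eq_zero he hm₁ hm₂
  obtain ⟨hn₁', hn₂'⟩ := hψ.map_mul_eq_and_map_mul_eq_zero he hn₁ hn₂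
  obtain ⟨hmn₁', hmn₂'⟩ := hψ.map_mul_eq_and_map_mul_eq_zero he hmn₁ hmn₂
  obtain ⟨hψmn, hψsmn⟩ := hψ.map_mul_star_and_map_star_mul he hm₁ hm₂ hn₁ hn₂
  have hy : ψ (e + (m + star m)) = ψ e + (ψ m + star (ψ m)) := by
    simpa [hψ.map_zero, hψ.map_add_star] using
      hψ.map_add_add_of_peirce hbij he he.isSelfAdjoint he.isIdempotentElem.eq hm₁ hm₂ (.zero R)
        (mul_zero e)
  have hz : ψ ((n + star n) + (1 - e)) = (ψ n + star (ψ n)) + (1 - ψ e) := by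
    simpa [hψ.map_zero, hψ.map_add_star, hψ.map_one_sub hbij he] using
      hψ.map_add_add_of_peirce hbij he (.zero R) (mul_zero e) hn₁ hn₂ he.one_sub.isSelfAdjoint
        he.isIdempotentElem.mul_one_sub_self
  have hys : IsSelfAdjoint (e + (m + star m)) := he.isSelfAdjoint.add (.add_star_self m)
  have hd₁ : e * (m * star n + star (m * star n)) = m * star n + star (m * star n) := by
    rw [star_mul, star_star, mul_add, ← mul_assoc, ← mul_assoc, hm₁, hn₁]
  have hd₂ : e * (star m * n + star (star m * n)) = 0 := by
    rw [star_mul, star_star, mul_add, ← mul_assoc, ← mul_assoc,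
      he.isSelfAdjoint.mul_star_eq_zero hm₂, he.isSelfAdjoint.mul_star_eq_zero hn₂, zero_mul,
      zero_mul, add_zero]
  have key := hψ.map_mul_add_mul_of_isSelfAdjoint hys ((n + star n) + (1 - e))
  rw [he.jordan_peirce_identity hm₁ hm₂ hn₁ hn₂, hy, hz,
    hE.jordan_peirce_identity hm₁' hm₂' hn₁' hn₂',
    hψ.map_add_add_of_peirce hbij he (.add_star_self _) hd₁ hmn₁ hmn₂ (.add_star_self _) hd₂] at key
  simp only [hψ.map_add_star, hψmn, hψsmn, add_left_cancel_iff, add_right_cancel_iff] at key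
  calc ψ (m + n) = ψ e * (ψ (m + n) + star (ψ (m + n))) * (1 - ψ e) :=
        (hE.isSelfAdjoint.mul_add_star_mul_one_sub hmn₁' hmn₂').symm
    _ = ψ m + ψ n := by
      rw [key, hE.isSelfAdjoint.mul_add_star_mul_one_sub (by rw [mul_add, hm₁', hn₁'])
        (by rw [add_mul, hm₂', hn₂', add_zero])]

theorem map_add_of_isSelfAdjoint_of_mul_eq (hR : IsPrimeRing R) (hψ : IsJordanStarMap ψ)
    (hbij : Function.Bijective ψ) (he : IsStarProjection e) (he₁ : 1 - e ≠ 0) {x y : R}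
    (hx : IsSelfAdjoint x) (hy : IsSelfAdjoint y) (hex : e * x = x) (hey : e * y = y) :
    ψ (x + y) = ψ x + ψ y := by
  obtain ⟨t, ht⟩ := hbij.2 (ψ x + ψ y)
  have hts : IsSelfAdjoint t := hbij.1 <| by
    rw [hψ.map_star, ht, star_add, (hψ.isSelfAdjoint_map hx).star_eq,
      (hψ.isSelfAdjoint_map hy).star_eq]
  have hxe : x * e = x := by simpa [hx.star_eq] using he.isSelfAdjoint.star_mul_eq_star hex
  have hye : y * e = y := by simpa [hy.star_eq] using he.isSelfAdjoint.star_mul_eq_star hey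
  have hte : t * e = t := hbij.1 <| by
    rw [hψ.map_mul_of_isSelfAdjoint hts he.isSelfAdjoint, ht, add_mul,
      ← hψ.map_mul_of_isSelfAdjoint hx he.isSelfAdjoint,
      ← hψ.map_mul_of_isSelfAdjoint hy he.isSelfAdjoint, hxe, hye]
  have het : e * t = t := by
    simpa [hts.star_eq, he.isSelfAdjoint.star_eq] using congr_arg star hte
  have hmul : ∀ n, e * n = n → n * e = 0 → t * n = x * n + y * n := by
    intro n hn₁ hn₂
    have hJ : ∀ a, IsSelfAdjoint a → e * a = a → ψ (a * n) = ψ a * ψ n + ψ n * ψ a := by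
      intro a ha hea
      have h := hψ.map_mul_add_mul_of_isSelfAdjoint ha n
      rwa [← hea, ← mul_assoc n, hn₂, zero_mul, add_zero, hea] at h
    apply hbij.1
    rw [hψ.map_add_of_mul_eq_of_mul_eq_zero hbij he (by rw [← mul_assoc, hex])
      (by rw [mul_assoc, hn₂, mul_zero]) (by rw [← mul_assoc, hey])
      (by rw [mul_assoc, hn₂, mul_zero]),
      hJ t hts het, hJ x hx hex, hJ y hy hey, ht]
    noncomm_ring
  have hzero : t - x - y = 0 := by
    refine (hR _ _ fun z => ?_).resolve_right he₁
    have hsub : (t - x - y) * e = t - x - y := by rw [sub_mul, sub_mul, hte, hxe, hye]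
    calc (t - x - y) * z * (1 - e) = (t - x - y) * e * z * (1 - e) := by rw [hsub]
      _ = (t - x - y) * (e * z * (1 - e)) := by simp only [mul_assoc]
      _ = 0 := by
        rw [sub_mul, sub_mul, hmul _ (by rw [← mul_assoc, ← mul_assoc, he.isIdempotentElem.eq])
          (by rw [mul_assoc, he.isIdempotentElem.one_sub_mul_self, mul_zero])]
        abel
  rw [← ht, show t = x + y by rw [← sub_eq_zero, ← hzero]; abel]

theorem map_add_star_add_add_star (hψ : IsJordanStarMap ψ) (hbij : Function.Bijective ψ)
    (he : IsStarProjection e) {v w : R} (hv₁ : e * v = v) (hv₂ : v * e = 0) (hw₁ : e * w = w)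
    (hw₂ : w * e = 0) :
    ψ ((v + star v) + (w + star w)) = ψ (v + star v) + ψ (w + star w) := by
  rw [show (v + star v) + (w + star w) = (v + w) + star (v + w) by rw [star_add]; abel,
    hψ.map_add_star, hψ.map_add_of_mul_eq_of_mul_eq_zero hbij he hv₁ hv₂ hw₁ hw₂, hψ.map_add_star,
    hψ.map_add_star, star_add]
  abel

theorem map_add_of_isSelfAdjoint (hR : IsPrimeRing R) (hψ : IsJordanStarMap ψ)
    (hbij : Function.Bijective ψ) (he : IsStarProjection e) (he₀ : e ≠ 0) (he₁ : 1 - e ≠ 0)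
    {u v : R} (hu : IsSelfAdjoint u) (hv : IsSelfAdjoint v) : ψ (u + v) = ψ u + ψ v := by
  have hf := he.one_sub
  have hcorner : ∀ {p : R}, IsStarProjection p → 1 - p ≠ 0 →
      ψ (p * (u + v) * p) = ψ (p * u * p) + ψ (p * v * p) := by
    intro p hp hp₁
    have hsa : ∀ {a : R}, IsSelfAdjoint a → IsSelfAdjoint (p * a * p) := fun ha => by
      simpa [hp.isSelfAdjoint.star_eq] using ha.conjugate p
    have hmem : ∀ a : R, p * (p * a * p) = p * a * p := fun a => by
      rw [← mul_assoc, ← mul_assoc, hp.isIdempotentElem.eq]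
    rw [mul_add, add_mul]
    exact hψ.map_add_of_isSelfAdjoint_of_mul_eq hR hbij hp hp₁ (hsa hu) (hsa hv) (hmem u) (hmem v)
  have hoff : ∀ a : R, e * (e * a * (1 - e)) = e * a * (1 - e) ∧ e * a * (1 - e) * e = 0 :=
    fun a => ⟨by rw [← mul_assoc, ← mul_assoc, he.isIdempotentElem.eq],
      by rw [mul_assoc, he.isIdempotentElem.one_sub_mul_self, mul_zero]⟩
  have h₁₂ : ψ (e * (u + v) * (1 - e) + star (e * (u + v) * (1 - e))) =
      ψ (e * u * (1 - e) + star (e * u * (1 - e))) +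
        ψ (e * v * (1 - e) + star (e * v * (1 - e))) := by
    rw [← hψ.map_add_star_add_add_star hbij he (hoff u).1 (hoff u).2 (hoff v).1 (hoff v).2,
      mul_add, add_mul, star_add]
    abel_nf
  rw [hψ.map_eq_peirce hbij he (hu.add hv), hψ.map_eq_peirce hbij he hu,
    hψ.map_eq_peirce hbij he hv, hcorner he he₁, h₁₂, hcorner hf (by rwa [sub_sub_cancel])]
  abel

theorem map_add (hR : IsPrimeRing R) (hψ : IsJordanStarMap ψ) (hbij : Function.Bijective ψ)
    (he : IsStarProjection e) (he₀ : e ≠ 0) (he₁ : 1 - e ≠ 0) (x y : R) :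
    ψ (x + y) = ψ x + ψ y :=
  hψ.map_add_of_forall_isSelfAdjoint
    (fun _ _ ha hb => hψ.map_add_of_isSelfAdjoint hR hbij he he₀ he₁ ha hb) x y

end IsJordanStarMap

end JordanStarMap

namespace VonNeumannAlgebra

variable {H : Type*} [NormedAddCommGroup H] [InnerProductSpace ℂ H] [CompleteSpace H]

open Module.End

theorem eq_bot_or_eq_top_of_mem_invtSubmodule (M : VonNeumannAlgebra H)
    (hfactor : ∀ z ∈ M, (∀ a ∈ M, z * a = a * z) → ∃ c : ℂ, z = c • (1 : H →L[ℂ] H))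
    (K : Submodule ℂ H) [K.HasOrthogonalProjection]
    (hM : ∀ y ∈ M, K ∈ invtSubmodule (y : H →ₗ[ℂ] H))
    (hM' : ∀ y ∈ M.commutant, K ∈ invtSubmodule (y : H →ₗ[ℂ] H)) : K = ⊥ ∨ K = ⊤ := by
  have hP : IsStarProjection K.starProjection := isStarProjection_starProjection
  have hPM : K.starProjection ∈ M :=
    (IsStarProjection.mem_iff hP M).2 (by rwa [K.range_starProjection])
  have hPM' : K.starProjection ∈ M.commutant := (IsStarProjection.mem_iff hP M.commutant).2
    (by rwa [commutant_commutant, K.range_starProjection])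
  obtain ⟨c, hc⟩ := hfactor _ hPM fun a ha => (mem_commutant_iff.1 hPM' a ha).symm
  refine or_iff_not_imp_left.2 fun hK => ?_
  obtain ⟨v, hv, hv0⟩ := (Submodule.ne_bot_iff K).1 hK
  have hc1 : c = 1 := by
    have h : c • v = v := by simpa [hc] using K.starProjection_eq_self_iff.2 hv
    have h' : (c - 1) • v = 0 := by rw [sub_smul, one_smul, h, sub_self]
    exact sub_eq_zero.1 ((smul_eq_zero.1 h').resolve_right hv0)
  exact eq_top_iff.2 fun w _ => K.starProjection_eq_self_iff.1 (by simp [hc, hc1])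

theorem eq_zero_or_eq_zero_of_mul_mul_eq_zero (M : VonNeumannAlgebra H)
    (hfactor : ∀ z ∈ M, (∀ a ∈ M, z * a = a * z) → ∃ c : ℂ, z = c • (1 : H →L[ℂ] H))
    {a b : H →L[ℂ] H} (ha : a ∈ M) (hab : ∀ z ∈ M, a * z * b = 0) : a = 0 ∨ b = 0 := by
  set L : Submodule ℂ H := ⨅ z ∈ M, LinearMap.ker ((a * z : H →L[ℂ] H) : H →ₗ[ℂ] H)
  have hmem : ∀ ξ, ξ ∈ L ↔ ∀ z ∈ M, a (z ξ) = 0 := by simp [L]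
  have hL : IsClosed (L : Set H) := by
    have : (L : Set H) = ⋂ z ∈ M, (a * z) ⁻¹' {0} := by ext; simp [hmem]
    rw [this]
    exact isClosed_biInter fun z _ => isClosed_singleton.preimage (a * z).continuous
  have : CompleteSpace L := hL.completeSpace_coe
  have hM : ∀ y ∈ M, L ∈ invtSubmodule (y : H →ₗ[ℂ] H) := by
    refine fun y hy => (mem_invtSubmodule_iff_forall_mem_of_mem _).2 fun ξ hξ => ?_
    rw [hmem] at hξ ⊢
    exact fun z hz => hξ (z * y) (mul_mem hz hy)
  have hM' : ∀ y ∈ M.commutant, L ∈ invtSubmodule (y : H →ₗ[ℂ] H) := by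
    refine fun y hy => (mem_invtSubmodule_iff_forall_mem_of_mem _).2 fun ξ hξ => ?_
    rw [hmem] at hξ ⊢
    intro z hz
    have hcomm := mem_commutant_iff.1 hy (a * z) (mul_mem ha hz)
    simpa [hξ z hz] using congr($hcomm ξ)
  rcases eq_bot_or_eq_top_of_mem_invtSubmodule M hfactor L hM hM' with h | h
  · right
    ext ξ
    have hb : b ξ ∈ L := (hmem _).2 fun z hz => by simpa using congr($(hab z hz) ξ)
    simpa [h] using hb
  · left
    ext ξ
    simpa using (hmem ξ).1 (h ▸ Submodule.mem_top) 1 (one_mem M)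

theorem isPrimeRing (M : VonNeumannAlgebra H)
    (hfactor : ∀ z ∈ M, (∀ a ∈ M, z * a = a * z) → ∃ c : ℂ, z = c • (1 : H →L[ℂ] H)) :
    IsPrimeRing M.toStarSubalgebra := fun a _ hab =>
  (eq_zero_or_eq_zero_of_mul_mul_eq_zero M hfactor a.2 fun z hz =>
    congr_arg Subtype.val (hab ⟨z, hz⟩)).imp Subtype.ext Subtype.ext

end VonNeumannAlgebra

theorem stmt19
    {H : Type*} [NormedAddCommGroup H] [InnerProductSpace ℂ H] [CompleteSpace H]
    (M : VonNeumannAlgebra H)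
    (hfactor : ∀ z ∈ M, (∀ a ∈ M, z * a = a * z) → ∃ c : ℂ, z = c • (1 : H →L[ℂ] H))
    (hproj : ∃ p : M.toStarSubalgebra, p ≠ 0 ∧ p ≠ 1 ∧ star p = p ∧ p * p = p)
    (m : ℕ)
    (φ : M.toStarSubalgebra → M.toStarSubalgebra) (hbij : Function.Bijective φ) (hunit : φ 1 = 1)
    (hsmul : ∀ (c : ℂ) (a : M.toStarSubalgebra), φ (c • a) = c • φ a) :
    (∀ x : Fin (m + 2) → M.toStarSubalgebra, φ (pvec (m + 1) x) = pvec (m + 1) (fun i => φ (x i))) ↔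
      ((∀ a b : M.toStarSubalgebra, φ (a + b) = φ a + φ b) ∧ (∀ a b : M.toStarSubalgebra, φ (a * b) = φ a * φ b) ∧
        (∀ a : M.toStarSubalgebra, φ (star a) = star (φ a))) := by
  obtain ⟨e, he₀, he₁, heS, heM⟩ := hproj
  have he : IsStarProjection e := ⟨heM, heS⟩
  refine ⟨fun hφ => ?_, fun ⟨hadd, hmul, hstar⟩ => map_pvec hadd hmul hstar (m + 1)⟩
  have hψ : IsJordanStarMap φ := .of_map_pvec hunit hsmul hφ
  have hadd := hψ.map_add (VonNeumannAlgebra.isPrimeRing M hfactor) hbij he he₀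
    (sub_ne_zero.2 he₁.symm)
  exact ⟨hadd, hψ.map_mul_of_map_add hadd, hψ.map_star⟩
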